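/- arXiv:2604.10370 — 4 statements merged into one kernel-verified Lean document; each statement's English description precedes it below -/
import Mathlib

section
/- Let R be a (possibly noncommutative) ring and S ∈ R. Set Δ := S^2 − S and S' := S − (2S − 1)·Δ. Then (2S − 1)^2 = 1 + 4Δ and S'^2 − S' = −3Δ^2 + 4Δ^3. -/
/-- In any ring, with `Δ := S^2 - S` and `S' := S - (2S - 1) * Δ`,
one has `(2S - 1)^2 = 1 + 4Δ` and `S'^2 - S' = -3Δ^2 + 4Δ^3`. -/
theorem szego_newton_step_identities {R : Type*} [Ring R] (S : R) :
    (2 * S - 1) ^ 2 = 1 + 4 * (S ^ 2 - S) ∧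
    (S - (2 * S - 1) * (S ^ 2 - S)) ^ 2 - (S - (2 * S - 1) * (S ^ 2 - S)) =
      -3 * (S ^ 2 - S) ^ 2 + 4 * (S ^ 2 - S) ^ 3 := by
  constructor <;> noncomm_ring
end

section
/- Let R be a commutative ring and S ∈ R. Define recursively S_0 := S and S_{n+1} := S_n − (2S_n − 1)·(S_n^2 − S_n). Then for every n ∈ ℕ, (S^2 − S)^{2^n} divides S_n^2 − S_n. -/
/-- in a commutative ring, the Newton iteration
`Sₙ₊₁ = Sₙ - (2Sₙ - 1)(Sₙ² - Sₙ)` satisfies `(S² - S)^(2^n) ∣ Sₙ² - Sₙ`. -/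
theorem szego_newton_iteration_dvd {R : Type*} [CommRing R] (S : R)
    (Sseq : ℕ → R) (h0 : Sseq 0 = S)
    (hrec : ∀ n, Sseq (n + 1) = Sseq n - (2 * Sseq n - 1) * ((Sseq n) ^ 2 - Sseq n)) :
    ∀ n, (S ^ 2 - S) ^ (2 ^ n) ∣ (Sseq n) ^ 2 - Sseq n := by
  intro n
  induction n with
  | zero => simp [h0]
  | succ n ih =>
    have key : (Sseq (n+1)) ^ 2 - Sseq (n+1)
        = ((Sseq n) ^ 2 - Sseq n) ^ 2 * ((2 * Sseq n - 1) ^ 2 - 4) := by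
      rw [hrec n]; ring
    rw [key, pow_succ 2 n, pow_mul]
    exact Dvd.dvd.mul_right (pow_dvd_pow_of_dvd ih 2) _
end

section
/- Let R be a ring with a complete multiplicative filtration I, i.e. I : ℕ → AddSubgroup R satisfies I 0 = R, I (k+1) ⊆ I k, x ∈ I j and y ∈ I k imply x·y ∈ I (j+k), and for every sequence x : ℕ → R with x k ∈ I k for all k there exists y ∈ R with y − (x 0 + x 1 + ⋯ + x (n−1)) ∈ I n for every n. If S_0 ∈ R satisfies S_0^2 − S_0 ∈ I 1, then there exists S ∈ R with S − S_0 ∈ I 1 and S^2 − S ∈ I k for every k ∈ ℕ. -/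
/-!
Newton's iteration for idempotents, `s ↦ 3s² - 2s³`, squares the idempotency defect:
if `s² - s ∈ I m` then the next iterate has defect in `I (2m)` and moves by an element of `I m`.
Starting from `S₀`, the iterates `Tₙ` therefore have defect in `I (2ⁿ)` and consecutive
differences in `I (2ⁿ) ⊆ I (n + 1)`; completeness sums the telescoping series to some `S`
with `S - Tₙ ∈ I (n + 1)`, and then `S² - S ∈ I (n + 1)` for every `n`.
-/

structure IsMultiplicativeFiltration {R : Type*} [Ring R] (I : ℕ → AddSubgroup R) : Prop where
  zero_eq_top : I 0 = ⊤
  succ_le : ∀ k, I (k + 1) ≤ I k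
  mul_mem : ∀ {j k : ℕ} {x y : R}, x ∈ I j → y ∈ I k → x * y ∈ I (j + k)

def HasAsymptoticSums {R : Type*} [Ring R] (I : ℕ → AddSubgroup R) : Prop :=
  ∀ x : ℕ → R, (∀ k, x k ∈ I k) → ∃ y : R, ∀ n, y - ∑ i ∈ Finset.range n, x i ∈ I n

def idempotentNewtonStep {R : Type*} [Ring R] (s : R) : R := 3 * s ^ 2 - 2 * s ^ 3

section

variable {R : Type*} [Ring R]

theorem idempotentNewtonStep_sub_self (s : R) :
    idempotentNewtonStep s - s = (s ^ 2 - s) * (1 - 2 * s) := by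
  unfold idempotentNewtonStep; noncomm_ring

theorem idempotentNewtonStep_sq_sub_self (s : R) :
    idempotentNewtonStep s ^ 2 - idempotentNewtonStep s
      = (s ^ 2 - s) * ((s ^ 2 - s) * ((1 - 2 * s) ^ 2 - 4)) := by
  unfold idempotentNewtonStep; noncomm_ring

theorem exists_sub_mem_of_succ_sub_mem {I : ℕ → AddSubgroup R} (h0 : I 0 = ⊤)
    (hsums : HasAsymptoticSums I) {T : ℕ → R} (hT : ∀ n, T (n + 1) - T n ∈ I (n + 1)) :
    ∃ S : R, ∀ n, S - T n ∈ I (n + 1) := by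
  let x : ℕ → R := fun
    | 0 => T 0
    | k + 1 => T (k + 1) - T k
  have hx : ∀ k, x k ∈ I k
    | 0 => by simp [h0]
    | k + 1 => hT k
  have hsum : ∀ n, ∑ i ∈ Finset.range (n + 1), x i = T n := fun n => by
    rw [Finset.sum_range_succ', Finset.sum_range_sub]
    exact sub_add_cancel _ _
  obtain ⟨S, hS⟩ := hsums x hx
  exact ⟨S, fun n => hsum n ▸ hS (n + 1)⟩

namespace IsMultiplicativeFiltration

variable {I : ℕ → AddSubgroup R} (hI : IsMultiplicativeFiltration I)
include hI

theorem antitone : Antitone I := antitone_nat_of_succ_le hI.succ_le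

theorem mul_mem_right {k : ℕ} {x : R} (y : R) (hx : x ∈ I k) : x * y ∈ I k :=
  hI.mul_mem (k := 0) hx (by simp [hI.zero_eq_top])

theorem mul_mem_left {k : ℕ} (x : R) {y : R} (hy : y ∈ I k) : x * y ∈ I k := by
  simpa using hI.mul_mem (j := 0) (by simp [hI.zero_eq_top]) hy

theorem idempotentNewtonStep_sub_self_mem {m : ℕ} {s : R} (hs : s ^ 2 - s ∈ I m) :
    idempotentNewtonStep s - s ∈ I m := by
  rw [idempotentNewtonStep_sub_self]
  exact hI.mul_mem_right _ hs

theorem idempotentNewtonStep_sq_sub_self_mem {m : ℕ} {s : R} (hs : s ^ 2 - s ∈ I m) :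
    idempotentNewtonStep s ^ 2 - idempotentNewtonStep s ∈ I (2 * m) := by
  rw [idempotentNewtonStep_sq_sub_self, two_mul]
  exact hI.mul_mem hs (hI.mul_mem_right _ hs)

theorem iterate_idempotentNewtonStep_sq_sub_self_mem {s : R} (hs : s ^ 2 - s ∈ I 1) (n : ℕ) :
    idempotentNewtonStep^[n] s ^ 2 - idempotentNewtonStep^[n] s ∈ I (2 ^ n) := by
  induction n with
  | zero => simpa using hs
  | succ n ih =>
    rw [Function.iterate_succ_apply', pow_succ']
    exact hI.idempotentNewtonStep_sq_sub_self_mem ih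

theorem sq_sub_self_mem_of_sub_mem {k : ℕ} {a b : R} (hab : a - b ∈ I k)
    (hb : b ^ 2 - b ∈ I k) : a ^ 2 - a ∈ I k := by
  have key : a ^ 2 - a = (a - b) * a + b * (a - b) - (a - b) + (b ^ 2 - b) := by noncomm_ring
  rw [key]
  exact add_mem (sub_mem (add_mem (hI.mul_mem_right _ hab) (hI.mul_mem_left _ hab)) hab) hb

end IsMultiplicativeFiltration

end

/-- in a ring with a complete multiplicative filtration, any `S₀` with
`S₀² - S₀ ∈ I 1` can be corrected to `S` with `S - S₀ ∈ I 1` which is an idempotent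
modulo every `I k`. -/
theorem szego_operator_exists {R : Type*} [Ring R] (I : ℕ → AddSubgroup R)
    (hI0 : I 0 = ⊤) (hmono : ∀ k, I (k + 1) ≤ I k)
    (hmul : ∀ (j k : ℕ) (x y : R), x ∈ I j → y ∈ I k → x * y ∈ I (j + k))
    (hcomplete : ∀ x : ℕ → R, (∀ k, x k ∈ I k) →
      ∃ y : R, ∀ n, y - (∑ i ∈ Finset.range n, x i) ∈ I n)
    (S₀ : R) (hS₀ : S₀ ^ 2 - S₀ ∈ I 1) :
    ∃ S : R, S - S₀ ∈ I 1 ∧ ∀ k : ℕ, S ^ 2 - S ∈ I k := by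
  have hI : IsMultiplicativeFiltration I := ⟨hI0, hmono, fun hx hy => hmul _ _ _ _ hx hy⟩
  set T : ℕ → R := fun n => idempotentNewtonStep^[n] S₀
  have hdefect (n : ℕ) : T n ^ 2 - T n ∈ I (n + 1) :=
    hI.antitone Nat.lt_two_pow_self (hI.iterate_idempotentNewtonStep_sq_sub_self_mem hS₀ n)
  have hstep (n : ℕ) : T (n + 1) - T n ∈ I (n + 1) := by
    simpa only [T, Function.iterate_succ_apply'] using
      hI.idempotentNewtonStep_sub_self_mem (hdefect n)
  obtain ⟨S, hS⟩ := exists_sub_mem_of_succ_sub_mem hI0 hcomplete hstep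
  refine ⟨S, hS 0, fun k => ?_⟩
  cases k with
  | zero => simp [hI0]
  | succ n => exact hI.sq_sub_self_mem_of_sub_mem (hS n) (hdefect n)
end

section
/- Let K be a field and V a K-vector space equipped with a decreasing filtration F : ℕ → Submodule K V such that F 0 = V and, for every sequence x : ℕ → V with x k ∈ F k for all k, there exists y ∈ V with y − (x 0 + x 1 + ⋯ + x (n−1)) ∈ F n for every n. Then there is a K-linear isomorphism between the quotient V ⧸ (⨅ k, F k) and the product ∏_{k ∈ ℕ} (F k ⧸ F (k+1)) of the successive filtration quotients. -/
/-- Auxiliary chain of "remainders": starting from `v0 ∈ F 0`, repeatedly project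
onto the next filtration step along the chosen complements. -/
noncomputable def tsChain {K V : Type*} [Field K] [AddCommGroup V] [Module K V]
    (F : ℕ → Submodule K V)
    (pr1 : ∀ n, (F n) →ₗ[K] (Submodule.comap (F n).subtype (F (n + 1))))
    (v0 : F 0) : ∀ n, F n
  | 0 => v0
  | n + 1 => ⟨((pr1 n (tsChain F pr1 v0 n) : F n) : V), (pr1 n (tsChain F pr1 v0 n)).2⟩

/-- "total symbol": for a complete decreasing filtration `F` on a
vector space `V` with `F 0 = V`, the quotient `V ⧸ ⨅ k, F k` is linearly isomorphic
to the product of the successive quotients `F k ⧸ F (k+1)`. -/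
theorem total_symbol_isomorphism {K V : Type*} [Field K] [AddCommGroup V] [Module K V]
    (F : ℕ → Submodule K V) (hF0 : F 0 = ⊤) (hmono : ∀ k, F (k + 1) ≤ F k)
    (hcomplete : ∀ x : ℕ → V, (∀ k, x k ∈ F k) →
      ∃ y : V, ∀ n, y - (∑ i ∈ Finset.range n, x i) ∈ F n) :
    Nonempty ((V ⧸ (⨅ k, F k)) ≃ₗ[K]
      ((k : ℕ) → (F k ⧸ Submodule.comap (F k).subtype (F (k + 1))))) := by
  classical
  choose q hq using fun k => Submodule.exists_isCompl
    (Submodule.comap (F k).subtype (F (k + 1)))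
  let pr1 : ∀ n, (F n) →ₗ[K] (Submodule.comap (F n).subtype (F (n + 1))) :=
    fun n => Submodule.linearProjOfIsCompl _ _ (hq n)
  let pr2 : ∀ n, (F n) →ₗ[K] (q n) :=
    fun n => Submodule.linearProjOfIsCompl _ _ (hq n).symm
  set I := ⨅ k, F k with hI
  let xw : (∀ k, q k) → ℕ → V := fun w k => ((w k : F k) : V)
  have hxw : ∀ w k, xw w k ∈ F k := fun w k => ((w k : F k)).2
  let lim : (∀ k, q k) → V := fun w => Classical.choose (hcomplete (xw w) (hxw w))
  have hlim : ∀ w n, lim w - (∑ i ∈ Finset.range n, xw w i) ∈ F n :=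
    fun w => Classical.choose_spec (hcomplete (xw w) (hxw w))
  have huniq : ∀ (x : ℕ → V) (y₁ y₂ : V),
      (∀ n, y₁ - (∑ i ∈ Finset.range n, x i) ∈ F n) →
      (∀ n, y₂ - (∑ i ∈ Finset.range n, x i) ∈ F n) → y₁ - y₂ ∈ I := by
    intro x y₁ y₂ h1 h2
    rw [hI, Submodule.mem_iInf]
    intro n
    have h := sub_mem (h1 n) (h2 n)
    simpa using h
  let L : (∀ k, q k) →ₗ[K] (V ⧸ I) :=
  { toFun := fun w => Submodule.Quotient.mk (lim w)
    map_add' := by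
      intro w w'
      have hsum : ∀ n, (∑ i ∈ Finset.range n, xw (w + w') i)
          = (∑ i ∈ Finset.range n, xw w i) + (∑ i ∈ Finset.range n, xw w' i) := by
        intro n
        rw [← Finset.sum_add_distrib]
        refine Finset.sum_congr rfl fun i _ => ?_
        simp [xw]
      have hmem : lim (w + w') - (lim w + lim w') ∈ I := by
        refine huniq (xw (w + w')) _ _ (hlim _) ?_
        intro n
        rw [hsum n]
        have h := add_mem (hlim w n) (hlim w' n)
        convert h using 1
        abel
      rw [← Submodule.Quotient.mk_add]
      exact (Submodule.Quotient.eq I).2 hmem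
    map_smul' := by
      intro c w
      have hsum : ∀ n, (∑ i ∈ Finset.range n, xw (c • w) i)
          = c • (∑ i ∈ Finset.range n, xw w i) := by
        intro n
        rw [Finset.smul_sum]
        refine Finset.sum_congr rfl fun i _ => ?_
        simp [xw]
      have hmem : lim (c • w) - c • lim w ∈ I := by
        refine huniq (xw (c • w)) _ _ (hlim _) ?_
        intro n
        rw [hsum n]
        have h := Submodule.smul_mem (F n) c (hlim w n)
        convert h using 1
        rw [smul_sub]
      simp only [RingHom.id_apply]
      rw [← Submodule.Quotient.mk_smul]
      exact (Submodule.Quotient.eq I).2 hmem }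
  have hIle : ∀ n, I ≤ F n := fun n => iInf_le F n
  have hinj : Function.Injective L := by
    rw [← LinearMap.ker_eq_bot, LinearMap.ker_eq_bot']
    intro w hw
    have hlimI : lim w ∈ I := by
      have : Submodule.Quotient.mk (lim w) = (0 : V ⧸ I) := hw
      rwa [Submodule.Quotient.mk_eq_zero] at this
    have hall : ∀ n, w n = 0 := by
      intro n
      induction n using Nat.strong_induction_on with
      | _ n ih =>
        have hS : (∑ i ∈ Finset.range (n + 1), xw w i) = xw w n := by
          rw [Finset.sum_range_succ]
          have : (∑ i ∈ Finset.range n, xw w i) = 0 := by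
            refine Finset.sum_eq_zero fun i hi => ?_
            have := ih i (Finset.mem_range.mp hi)
            simp [xw, this]
          rw [this, zero_add]
        have h1 : lim w - xw w n ∈ F (n + 1) := by
          have := hlim w (n + 1); rwa [hS] at this
        have h2 : xw w n ∈ F (n + 1) := by
          have := sub_mem (hIle (n + 1) hlimI) h1
          simpa using this
        have hmem1 : ((w n : F n)) ∈ Submodule.comap (F n).subtype (F (n + 1)) := h2
        have hmem2 : ((w n : F n)) ∈ q n := (w n).2
        have hz : ((w n : F n)) = 0 :=
          Submodule.disjoint_def.mp (hq n).disjoint _ hmem1 hmem2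
        exact Subtype.ext (by simpa using congrArg Subtype.val hz)
    funext n
    exact hall n
  have hsurj : Function.Surjective L := by
    intro z
    obtain ⟨v, rfl⟩ := Submodule.Quotient.mk_surjective I z
    let c : ∀ n, F n := tsChain F pr1 ⟨v, by rw [hF0]; trivial⟩
    let w : ∀ k, q k := fun k => pr2 k (c k)
    have hc : ∀ n, v - (∑ i ∈ Finset.range n, xw w i) = (c n : V) := by
      intro n
      induction n with
      | zero => simp [c, tsChain]
      | succ n ih =>
        rw [Finset.sum_range_succ, ← sub_sub, ih]
        have hdec : ((pr1 n (c n) : F n) : V) + ((pr2 n (c n) : F n) : V) = (c n : V) := by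
          have := Submodule.projection_add_projection_eq_self (hq n) (c n)
          exact congrArg Subtype.val this
        have : (c (n + 1) : V) = ((pr1 n (c n) : F n) : V) := rfl
        rw [this, ← hdec]
        simp [xw, w]
    refine ⟨w, ?_⟩
    have hmem : lim w - v ∈ I := by
      refine huniq (xw w) _ _ (hlim w) fun n => ?_
      rw [hc n]
      exact (c n).2
    exact (Submodule.Quotient.eq I).2 hmem
  exact ⟨(LinearEquiv.ofBijective L ⟨hinj, hsurj⟩).symm.trans
    (LinearEquiv.piCongrRight fun k =>
      (Submodule.quotientEquivOfIsCompl _ _ (hq k)).symm)⟩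
end
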